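/- Let G be the disjoint union of two isomorphic graphs H_1 and H_2 with vertex sets V = {v_1, …, v_k} and W = {w_1, …, w_k} respectively, where the map f with f(v_i) = w_i for 1 ≤ i ≤ k is a graph isomorphism from H_1 to H_2. Then there exist k bicliques B_1, …, B_k with partite sets (X_1, Y_1), …, (X_k, Y_k) such that: (i) B_1, …, B_k form an odd cover of G, and (ii) X_i = {v_i, w_i} for all 1 ≤ i ≤ k. In particular, b_2(H + H) ≤ |V(H)| for every graph H. -/

import Mathlib

open Finset

/-- The number of bicliques in the collection `f` that cover the pair `(u, v)`. -/
noncomputable def coversCount {V : Type*} {m : ℕ} (f : Fin m → Finset V × Finset V) (u v : V) : ℕ :=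
  Nat.card {i : Fin m // (u ∈ (f i).1 ∧ v ∈ (f i).2) ∨ (u ∈ (f i).2 ∧ v ∈ (f i).1)}

/-- `f` is an odd cover of `G`: a collection of bicliques (pairs of disjoint finite sets of
vertices) covering each edge of `G` an odd number of times and each nonedge an even number
of times. -/
def IsOddCover {V : Type*} (G : SimpleGraph V) {m : ℕ}
    (f : Fin m → Finset V × Finset V) : Prop :=
  (∀ i, Disjoint (f i).1 (f i).2) ∧
  ∀ u v : V, u ≠ v → (G.Adj u v ↔ Odd (coversCount f u v))

/-- `b2 G` is the minimum cardinality of an odd cover of `G`. -/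
noncomputable def b2 {V : Type*} (G : SimpleGraph V) : ℕ :=
  sInf {m : ℕ | ∃ f : Fin m → Finset V × Finset V, IsOddCover G f}

/-- `r2 G` is the rank over `𝔽₂` of the adjacency matrix of `G`. -/
noncomputable def r2 {V : Type*} [Fintype V] (G : SimpleGraph V) : ℕ :=
  letI := Classical.decRel G.Adj
  (SimpleGraph.adjMatrix (ZMod 2) G).rank

/-- Disjoint union of an indexed family of graphs, on the sigma type of the vertex types. -/
def sigmaSum {ι : Type*} {α : ι → Type*} (G : (i : ι) → SimpleGraph (α i)) :
    SimpleGraph ((i : ι) × α i) where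
  Adj x y := ∃ (i : ι) (a b : α i), (G i).Adj a b ∧ x = ⟨i, a⟩ ∧ y = ⟨i, b⟩
  symm := by constructor; rintro x y ⟨i, a, b, h, rfl, rfl⟩; exact ⟨i, b, a, h.symm, rfl, rfl⟩
  loopless := by
    constructor
    rintro x ⟨i, a, b, h, rfl, h2⟩
    obtain ⟨-, h3⟩ := Sigma.mk.inj_iff.mp h2
    exact (G i).irrefl (v := a) (by cases h3; exact h)

/-! Number the vertices of `H` by `Fin k`. The biclique of `i` joins both copies `vᵢ, wᵢ` of `i`
to the copies `vⱼ` of its neighbours `j > i` and the copies `wⱼ` of its neighbours `j < i`.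
An edge `vₐv_b` with `a < b` is then covered only by the biclique of `a`, an edge `wₐw_b` only by
that of `b`, and a pair `vₐw_b` with `a ≠ b` by the bicliques of both `a` and `b` if `b < a` and
`ab` is an edge, and by neither otherwise. Transporting along `V ≃ Fin (card V)` gives the bound
on `b₂`. -/

section CoversCount

variable {V : Type*} {m : ℕ} (f : Fin m → Finset V × Finset V)

lemma coversCount_eq_card [DecidableEq V] (u v : V) :
    coversCount f u v = #{i | (u ∈ (f i).1 ∧ v ∈ (f i).2) ∨ (u ∈ (f i).2 ∧ v ∈ (f i).1)} := by
  rw [coversCount, Nat.card_eq_fintype_card, Fintype.card_subtype]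

variable {f} {c : V → Fin m}

lemma coversCount_eq_zero_of_center_eq (hc : ∀ i x, x ∈ (f i).1 ↔ c x = i)
    (hdisj : ∀ i, Disjoint (f i).1 (f i).2) {u v : V} (huv : c u = c v) :
    coversCount f u v = 0 := by
  classical
  rw [coversCount_eq_card, card_eq_zero, filter_eq_empty_iff]
  rintro i - (⟨hu, hv⟩ | ⟨hu, hv⟩)
  · exact disjoint_left.1 (hdisj i) ((hc i v).2 (huv ▸ (hc i u).1 hu)) hv
  · exact disjoint_left.1 (hdisj i) ((hc i u).2 (huv ▸ (hc i v).1 hv)) hu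

lemma coversCount_eq_of_center_ne [DecidableEq V] (hc : ∀ i x, x ∈ (f i).1 ↔ c x = i)
    {u v : V} (huv : c u ≠ c v) :
    coversCount f u v =
      (if v ∈ (f (c u)).2 then 1 else 0) + (if u ∈ (f (c v)).2 then 1 else 0) := by
  have hsplit : ({i | (u ∈ (f i).1 ∧ v ∈ (f i).2) ∨ (u ∈ (f i).2 ∧ v ∈ (f i).1)} : Finset _) =
      ({c u} : Finset _).filter (fun i => v ∈ (f i).2) ∪
        ({c v} : Finset _).filter (fun i => u ∈ (f i).2) := by
    ext i
    simp only [mem_filter, mem_univ, true_and, mem_union, mem_singleton, hc]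
    grind
  rw [coversCount_eq_card, hsplit, card_union_of_disjoint, filter_singleton, filter_singleton]
  · split_ifs <;> rfl
  · exact disjoint_filter_filter (disjoint_singleton.2 huv)

end CoversCount

open Classical in
noncomputable def twinCover {k : ℕ} (H : SimpleGraph (Fin k)) (i : Fin k) :
    Finset (Fin k ⊕ Fin k) × Finset (Fin k ⊕ Fin k) :=
  ({.inl i, .inr i}, disjSum {j | i < j ∧ H.Adj i j} {j | j < i ∧ H.Adj i j})

section TwinCover

variable {k : ℕ} (H : SimpleGraph (Fin k))

lemma mem_twinCover_fst (i : Fin k) (x : Fin k ⊕ Fin k) :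
    x ∈ (twinCover H i).1 ↔ Sum.elim id id x = i := by
  cases x <;> simp [twinCover, eq_comm]

lemma inl_mem_twinCover_snd {i j : Fin k} :
    Sum.inl j ∈ (twinCover H i).2 ↔ i < j ∧ H.Adj i j := by
  classical simp [twinCover]

lemma inr_mem_twinCover_snd {i j : Fin k} :
    Sum.inr j ∈ (twinCover H i).2 ↔ j < i ∧ H.Adj i j := by
  classical simp [twinCover]

lemma disjoint_twinCover (i : Fin k) : Disjoint (twinCover H i).1 (twinCover H i).2 := by
  rw [disjoint_left]
  rintro (j | j) hj
  all_goals
    rw [mem_twinCover_fst] at hj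
    cases hj
    simp [inl_mem_twinCover_snd, inr_mem_twinCover_snd]

lemma isOddCover_twinCover : IsOddCover (H ⊕g H) (twinCover H) := by
  classical
  refine ⟨disjoint_twinCover H, fun u v huv => ?_⟩
  by_cases hc : Sum.elim id id u = Sum.elim id id v
  · rw [coversCount_eq_zero_of_center_eq (mem_twinCover_fst H) (disjoint_twinCover H) hc]
    rcases u with a | a <;> rcases v with b | b <;> simp_all
  · rw [coversCount_eq_of_center_ne (mem_twinCover_fst H) hc]
    rcases u with a | a <;> rcases v with b | b <;>
      simp only [Sum.elim_inl, Sum.elim_inr, id] at hc <;>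
      rcases lt_or_gt_of_ne hc with h | h <;> by_cases hab : H.Adj a b <;>
      simp [inl_mem_twinCover_snd, inr_mem_twinCover_snd, h, h.not_gt, hab, H.adj_comm b a]

end TwinCover

section Transport

variable {V W : Type*} {m : ℕ}

lemma coversCount_map_equiv (f : Fin m → Finset V × Finset V) (e : V ≃ W) (u v : W) :
    coversCount (fun i => ((f i).1.map e.toEmbedding, (f i).2.map e.toEmbedding)) u v =
      coversCount f (e.symm u) (e.symm v) :=
  Nat.card_congr <| Equiv.subtypeEquivRight fun i => by simp only [mem_map_equiv]

lemma IsOddCover.map_iso {G : SimpleGraph V} {G' : SimpleGraph W}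
    {f : Fin m → Finset V × Finset V} (hf : IsOddCover G f) (e : G ≃g G') :
    IsOddCover G'
      (fun i => ((f i).1.map e.toEquiv.toEmbedding, (f i).2.map e.toEquiv.toEmbedding)) := by
  refine ⟨fun i => (disjoint_map _).2 (hf.1 i), fun u v huv => ?_⟩
  rw [coversCount_map_equiv]
  exact e.symm.map_adj_iff.symm.trans (hf.2 _ _ (e.symm.injective.ne huv))

end Transport

lemma b2_le_of_isOddCover {V : Type*} {G : SimpleGraph V} {m : ℕ}
    {f : Fin m → Finset V × Finset V} (hf : IsOddCover G f) : b2 G ≤ m :=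
  Nat.sInf_le ⟨f, hf⟩

lemma b2_sum_self_le_card {V : Type*} [Fintype V] (H : SimpleGraph V) :
    b2 (H ⊕g H) ≤ Fintype.card V :=
  let e := H.overFinIso rfl
  b2_le_of_isOddCover ((isOddCover_twinCover _).map_iso (e.sumCongr e).symm)

/-- For the disjoint union of two copies of a graph `H` on vertices
`v₁,…,v_k` (resp. `w₁,…,w_k`), there is an odd cover by `k` bicliques `(Xᵢ, Yᵢ)` with
`Xᵢ = {vᵢ, wᵢ}`; in particular `b₂(H + H) ≤ |V(H)|` for every finite graph `H`. -/
theorem stmt5 :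
    (∀ (k : ℕ) (H : SimpleGraph (Fin k)),
      ∃ f : Fin k → Finset (Fin k ⊕ Fin k) × Finset (Fin k ⊕ Fin k),
        IsOddCover (H ⊕g H) f ∧
        ∀ i : Fin k, (f i).1 = ({Sum.inl i, Sum.inr i} : Finset (Fin k ⊕ Fin k))) ∧
    (∀ (V : Type) [Fintype V] (H : SimpleGraph V), b2 (H ⊕g H) ≤ Fintype.card V) :=
  ⟨fun _ H => ⟨twinCover H, isOddCover_twinCover H, fun _ => rfl⟩,
    fun _ _ H => b2_sum_self_le_card H⟩
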